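/- Let G be a countable group. If G admits a group homomorphism with nontrivial image into Homeo₊(ℝ), then G admits a group homomorphism with nontrivial image into the group Homeo̰₊(ℝ, 0) of germs at 0 of orientation-preserving homeomorphisms of ℝ fixing 0. -/

import Mathlib

open Filter Topology Set

def HomeoPlusReal : Subgroup (Equiv.Perm ℝ) where
  carrier := {f | Continuous f ∧ Continuous f.symm ∧ StrictMono f}
  one_mem' := by
    refine ⟨continuous_id, ?_, fun a b h => h⟩
    exact continuous_id
  mul_mem' := by
    rintro a b ⟨ha1, ha2, ha3⟩ ⟨hb1, hb2, hb3⟩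
    refine ⟨?_, ?_, ?_⟩
    · simpa [Equiv.Perm.coe_mul] using ha1.comp hb1
    · have : Continuous (⇑b.symm ∘ ⇑a.symm) := hb2.comp ha2
      simpa [Equiv.Perm.mul_def, Equiv.symm_trans_apply, Function.comp] using this
    · intro x y h
      simpa [Equiv.Perm.coe_mul] using ha3 (hb3 h)
  inv_mem' := by
    rintro a ⟨ha1, ha2, ha3⟩
    refine ⟨by exact ha2, by exact ha1, ?_⟩
    intro x y h
    have h2 := ha3.lt_iff_lt (a := a.symm x) (b := a.symm y)
    simp only [Equiv.apply_symm_apply] at h2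
    simpa using h2.mp h

/-- Data representing a local orientation-preserving homeomorphism of `ℝ`
defined on an open neighborhood `U` of `0`, fixing `0`, together with a local
inverse `G` defined on the open image neighborhood `V`. -/
structure LocalHomeoAtZero where
  F : ℝ → ℝ
  G : ℝ → ℝ
  U : Set ℝ
  V : Set ℝ
  isOpen_U : IsOpen U
  isOpen_V : IsOpen V
  mem_U : (0 : ℝ) ∈ U
  mem_V : (0 : ℝ) ∈ V
  contF : ContinuousOn F U
  contG : ContinuousOn G V
  mapsF : Set.MapsTo F U V
  mapsG : Set.MapsTo G V U
  leftInv : ∀ x ∈ U, G (F x) = x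
  rightInv : ∀ x ∈ V, F (G x) = x
  mono : StrictMonoOn F U
  fixes : F 0 = 0

namespace LocalHomeoAtZero

/-- Two local homeomorphisms are identified when they agree on some
neighborhood of `0`, i.e. they have the same germ at `0`. -/
instance setoid : Setoid LocalHomeoAtZero where
  r d e := d.F =ᶠ[nhds (0 : ℝ)] e.F
  iseqv := ⟨fun _ => Filter.EventuallyEq.refl _ _,
    fun h => h.symm, fun h h' => h.trans h'⟩

lemma G_fixes (d : LocalHomeoAtZero) : d.G 0 = 0 := by
  have h := d.leftInv 0 d.mem_U
  rw [d.fixes] at h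
  exact h

/-- The identity element. -/
def one : LocalHomeoAtZero where
  F := id
  G := id
  U := Set.univ
  V := Set.univ
  isOpen_U := isOpen_univ
  isOpen_V := isOpen_univ
  mem_U := trivial
  mem_V := trivial
  contF := continuousOn_id
  contG := continuousOn_id
  mapsF := fun x _ => trivial
  mapsG := fun x _ => trivial
  leftInv := fun x _ => rfl
  rightInv := fun x _ => rfl
  mono := fun x _ y _ h => h
  fixes := rfl

/-- Composition of local homeomorphisms. -/
def comp (d e : LocalHomeoAtZero) : LocalHomeoAtZero where
  F := d.F ∘ e.F
  G := e.G ∘ d.G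
  U := e.U ∩ e.F ⁻¹' d.U
  V := d.V ∩ d.G ⁻¹' e.V
  isOpen_U := e.contF.isOpen_inter_preimage e.isOpen_U d.isOpen_U
  isOpen_V := d.contG.isOpen_inter_preimage d.isOpen_V e.isOpen_V
  mem_U := ⟨e.mem_U, by simp only [Set.mem_preimage, e.fixes]; exact d.mem_U⟩
  mem_V := ⟨d.mem_V, by simp only [Set.mem_preimage, d.G_fixes]; exact e.mem_V⟩
  contF := d.contF.comp (e.contF.mono Set.inter_subset_left) (fun x hx => hx.2)
  contG := e.contG.comp (d.contG.mono Set.inter_subset_left) (fun x hx => hx.2)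
  mapsF := by
    rintro x ⟨hx1, hx2⟩
    refine ⟨d.mapsF hx2, ?_⟩
    simp only [Set.mem_preimage, Function.comp_apply]
    rw [d.leftInv _ hx2]
    exact e.mapsF hx1
  mapsG := by
    rintro y ⟨hy1, hy2⟩
    refine ⟨e.mapsG hy2, ?_⟩
    simp only [Set.mem_preimage, Function.comp_apply]
    rw [e.rightInv _ hy2]
    exact d.mapsG hy1
  leftInv := by
    rintro x ⟨hx1, hx2⟩
    simp only [Function.comp_apply]
    rw [d.leftInv _ hx2, e.leftInv _ hx1]
  rightInv := by
    rintro y ⟨hy1, hy2⟩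
    simp only [Function.comp_apply]
    rw [e.rightInv _ hy2, d.rightInv _ hy1]
  mono := by
    rintro x ⟨hx1, hx2⟩ y ⟨hy1, hy2⟩ hxy
    exact d.mono hx2 hy2 (e.mono hx1 hy1 hxy)
  fixes := by simp only [Function.comp_apply, e.fixes, d.fixes]

/-- Inverse of a local homeomorphism. -/
def inv (d : LocalHomeoAtZero) : LocalHomeoAtZero where
  F := d.G
  G := d.F
  U := d.V
  V := d.U
  isOpen_U := d.isOpen_V
  isOpen_V := d.isOpen_U
  mem_U := d.mem_V
  mem_V := d.mem_U
  contF := d.contG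
  contG := d.contF
  mapsF := d.mapsG
  mapsG := d.mapsF
  leftInv := d.rightInv
  rightInv := d.leftInv
  mono := by
    intro x hx y hy hxy
    rcases lt_trichotomy (d.G x) (d.G y) with h | h | h
    · exact h
    · exfalso
      have : x = y := by
        rw [← d.rightInv x hx, ← d.rightInv y hy, h]
      exact absurd this (ne_of_lt hxy)
    · exfalso
      have := d.mono (d.mapsG hy) (d.mapsG hx) h
      rw [d.rightInv x hx, d.rightInv y hy] at this
      exact absurd hxy (not_lt.mpr this.le)
  fixes := d.G_fixes

lemma comp_sound {d₁ e₁ d₂ e₂ : LocalHomeoAtZero} (h₁ : d₁ ≈ e₁) (h₂ : d₂ ≈ e₂) :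
    comp d₁ d₂ ≈ comp e₁ e₂ := by
  have hc : ContinuousAt d₂.F 0 := d₂.contF.continuousAt (d₂.isOpen_U.mem_nhds d₂.mem_U)
  have ht : Tendsto d₂.F (nhds (0 : ℝ)) (nhds (0 : ℝ)) := by
    have := hc.tendsto
    rwa [d₂.fixes] at this
  have hA : d₁.F ∘ d₂.F =ᶠ[nhds (0 : ℝ)] e₁.F ∘ d₂.F := h₁.comp_tendsto ht
  have hB : e₁.F ∘ d₂.F =ᶠ[nhds (0 : ℝ)] e₁.F ∘ e₂.F := h₂.fun_comp e₁.F
  exact hA.trans hB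

lemma inv_sound {d e : LocalHomeoAtZero} (h : d ≈ e) : inv d ≈ inv e := by
  obtain ⟨s, hs, hseq⟩ := Filter.eventuallyEq_iff_exists_mem.mp h
  obtain ⟨W, hWs, hWopen, hW0⟩ := mem_nhds_iff.mp hs
  set A : Set ℝ := d.U ∩ e.U ∩ W with hA
  have hAopen : IsOpen A := (d.isOpen_U.inter e.isOpen_U).inter hWopen
  have hA0 : (0 : ℝ) ∈ A := ⟨⟨d.mem_U, e.mem_U⟩, hW0⟩
  set B : Set ℝ := d.V ∩ d.G ⁻¹' A with hB
  have hBopen : IsOpen B := d.contG.isOpen_inter_preimage d.isOpen_V hAopen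
  have hB0 : (0 : ℝ) ∈ B := ⟨d.mem_V, by simp only [Set.mem_preimage, d.G_fixes]; exact hA0⟩
  apply Filter.eventuallyEq_of_mem (hBopen.mem_nhds hB0)
  rintro y ⟨hy1, hy2⟩
  simp only [Set.mem_preimage] at hy2
  obtain ⟨⟨hxU, hxU'⟩, hxW⟩ := hy2
  show d.G y = e.G y
  have h1 : d.F (d.G y) = y := d.rightInv y hy1
  have h2 : e.F (d.G y) = y := by rw [← hseq (hWs hxW)]; exact h1
  calc d.G y = e.G (e.F (d.G y)) := (e.leftInv _ hxU').symm
    _ = e.G y := by rw [h2]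

end LocalHomeoAtZero

/-- The group of germs at `0` of orientation-preserving local homeomorphisms of `ℝ`
fixing `0`, under composition of germs. -/
def GermHomeoPlus : Type := Quotient LocalHomeoAtZero.setoid

namespace GermHomeoPlus

instance : Group GermHomeoPlus where
  mul := Quotient.map₂ LocalHomeoAtZero.comp
    (fun _ _ h₁ _ _ h₂ => LocalHomeoAtZero.comp_sound h₁ h₂)
  one := ⟦LocalHomeoAtZero.one⟧
  inv := Quotient.map LocalHomeoAtZero.inv (fun _ _ h => LocalHomeoAtZero.inv_sound h)
  mul_assoc a b c := by
    induction a using Quotient.ind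
    induction b using Quotient.ind
    induction c using Quotient.ind
    exact Quotient.sound (Filter.EventuallyEq.refl _ _)
  one_mul a := by
    induction a using Quotient.ind
    exact Quotient.sound (Filter.EventuallyEq.refl _ _)
  mul_one a := by
    induction a using Quotient.ind
    exact Quotient.sound (Filter.EventuallyEq.refl _ _)
  inv_mul_cancel a := by
    induction a using Quotient.ind
    rename_i d
    apply Quotient.sound
    apply Filter.eventuallyEq_of_mem (d.isOpen_U.mem_nhds d.mem_U)
    intro x hx
    exact d.leftInv x hx

end GermHomeoPlus

/-!
Order automorphisms of `ℝ` are homeomorphisms, so everything can be done order-theoretically.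
Cut `(0, ∞)` into the blocks `[exp n, exp (n + 1))`, `n : ℤ`, identify the interior of each block
with `ℝ`, and let a homeomorphism `f` act on every block at once, fixing `(-∞, 0]` and the block
endpoints. This is an injective homomorphism from `Homeo₊(ℝ)` into the stabiliser of `0`, and
since the blocks accumulate at `0`, the image of `f ≠ 1` moves points arbitrarily close to `0`:
its germ at `0` is nontrivial.
-/

namespace OrderIso

variable {α β : Type*} [Preorder α] [Preorder β]

def conjHom (e : α ≃o β) : (α ≃o α) →* (β ≃o β) where
  toFun f := e.symm.trans (f.trans e)
  map_one' := by ext; simp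
  map_mul' f g := by ext; simp

@[simp]
lemma conjHom_apply (e : α ≃o β) (f : α ≃o α) (x : β) : conjHom e f x = e (f (e.symm x)) :=
  rfl

def blockwiseHom (α ι β : Type*) [Preorder α] [Preorder ι] [PartialOrder β] :
    (β ≃o β) →* (α ⊕ₗ ι ×ₗ WithBot β ≃o α ⊕ₗ ι ×ₗ WithBot β) where
  toFun f := sumLexCongr (.refl α) (Prod.Lex.prodLexCongr (.refl ι) f.withBotCongr)
  map_one' := by ext (a | ⟨i, _ | b⟩) <;> rfl
  map_mul' f g := by ext (a | ⟨i, _ | b⟩) <;> rfl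

end OrderIso

section IntLex

variable {R β : Type*} [Ring R] [LinearOrder R] [IsStrictOrderedRing R] [FloorRing R] {u : β → R}

lemma strictMono_intCast_add_of_range_subset_Ico [Preorder β] (hu : StrictMono u)
    (hrange : range u ⊆ Ico 0 1) :
    StrictMono fun p : ℤ ×ₗ β ↦ ((ofLex p).1 : R) + u (ofLex p).2 := by
  intro p q hpq
  dsimp only
  rcases Prod.Lex.lt_iff.1 hpq with hlt | ⟨heq, hlt⟩
  · calc ((ofLex p).1 : R) + u (ofLex p).2 < (ofLex p).1 + 1 := by
          gcongr; exact (hrange (mem_range_self _)).2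
      _ ≤ (ofLex q).1 := by exact_mod_cast hlt
      _ ≤ (ofLex q).1 + u (ofLex q).2 := le_add_of_nonneg_right (hrange (mem_range_self _)).1
  · simp only [heq, add_lt_add_iff_left]
    exact hu hlt

lemma surjective_intCast_add_of_range_eq_Ico (hu : range u = Ico 0 1) :
    Function.Surjective fun p : ℤ ×ₗ β ↦ ((ofLex p).1 : R) + u (ofLex p).2 := by
  intro y
  obtain ⟨b, hb⟩ : Int.fract y ∈ range u := hu ▸ ⟨Int.fract_nonneg y, Int.fract_lt_one y⟩
  exact ⟨toLex (⌊y⌋, b), by simp [hb]⟩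

noncomputable def intLexOrderIso [LinearOrder β] (hu : StrictMono u) (hrange : range u = Ico 0 1) :
    ℤ ×ₗ β ≃o R :=
  StrictMono.orderIsoOfSurjective _
    (strictMono_intCast_add_of_range_subset_Ico hu hrange.subset)
    (surjective_intCast_add_of_range_eq_Ico hrange)

end IntLex

namespace Real

noncomputable def sigmoidWithBot : WithBot ℝ → ℝ := WithBot.recBotCoe 0 sigmoid

lemma strictMono_sigmoidWithBot : StrictMono sigmoidWithBot := by
  rintro (_ | x) (_ | y) hxy
  · exact absurd hxy (lt_irrefl _)
  · exact sigmoid_pos y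
  · exact absurd hxy (WithBot.not_lt_bot _)
  · exact sigmoid_strictMono (WithBot.coe_lt_coe.1 hxy)

lemma range_sigmoidWithBot : range sigmoidWithBot = Ico 0 1 := by
  rw [← Ioo_insert_left zero_lt_one, ← range_sigmoid]
  ext y
  simp [sigmoidWithBot, WithBot.exists, eq_comm]

/-- `ℝ` as `(-∞, 0]` followed by the blocks `[exp n, exp (n + 1))`, `n : ℤ`; the block `n` is
its left endpoint `exp n` (the `⊥` of `WithBot ℝ`) followed by a copy `x ↦ exp (n + sigmoid x)`
of `ℝ`. -/
noncomputable def blocksOrderIso : Iic (0 : ℝ) ⊕ₗ ℤ ×ₗ WithBot ℝ ≃o ℝ :=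
  (OrderIso.sumLexCongr (.refl _)
    ((intLexOrderIso strictMono_sigmoidWithBot range_sigmoidWithBot).trans expOrderIso)).trans
    (OrderIso.sumLexIicIoi 0)

noncomputable def pasteNearZero : (ℝ ≃o ℝ) →* (ℝ ≃o ℝ) :=
  (OrderIso.conjHom blocksOrderIso).comp (OrderIso.blockwiseHom _ _ _)

lemma blocksOrderIso_symm_zero :
    blocksOrderIso.symm 0 = toLex (Sum.inl (⟨0, le_refl (0 : ℝ)⟩ : Iic (0 : ℝ))) :=
  blocksOrderIso.symm_apply_eq.2 rfl

lemma blocksOrderIso_apply_inr (n : ℤ) (x : ℝ) :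
    blocksOrderIso (toLex (Sum.inr (toLex (n, (x : WithBot ℝ))))) = exp (n + sigmoid x) :=
  rfl

lemma pasteNearZero_apply_zero (f : ℝ ≃o ℝ) : pasteNearZero f 0 = 0 := by
  rw [pasteNearZero, MonoidHom.comp_apply, OrderIso.conjHom_apply, blocksOrderIso_symm_zero]
  rfl

lemma pasteNearZero_apply_exp (f : ℝ ≃o ℝ) (n : ℤ) (x : ℝ) :
    pasteNearZero f (exp (n + sigmoid x)) = exp (n + sigmoid (f x)) := by
  rw [← blocksOrderIso_apply_inr, pasteNearZero, MonoidHom.comp_apply, OrderIso.conjHom_apply,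
    OrderIso.symm_apply_apply]
  rfl

lemma eq_one_of_pasteNearZero_eventuallyEq_id {f : ℝ ≃o ℝ} (hf : pasteNearZero f =ᶠ[𝓝 0] id) :
    f = 1 := by
  ext x
  have hblocks : Tendsto (fun n : ℤ ↦ exp (n + sigmoid x)) atBot (𝓝 0) :=
    tendsto_exp_atBot.comp
      (tendsto_atBot_add_const_right _ _ (tendsto_intCast_atBot_iff.2 tendsto_id))
  obtain ⟨n, hn⟩ := (hblocks.eventually hf).exists
  simpa [pasteNearZero_apply_exp] using hn

end Real

namespace HomeoPlusReal

def toOrderIso : HomeoPlusReal →* (ℝ ≃o ℝ) where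
  toFun f := ⟨f.1, f.2.2.2.le_iff_le⟩
  map_one' := rfl
  map_mul' _ _ := rfl

lemma toOrderIso_injective : Function.Injective toOrderIso :=
  fun _ _ h ↦ Subtype.ext (Equiv.ext fun x ↦ DFunLike.congr_fun h x)

end HomeoPlusReal

def LocalHomeoAtZero.ofOrderIso (f : ℝ ≃o ℝ) (hf : f 0 = 0) : LocalHomeoAtZero where
  F := f
  G := f.symm
  U := univ
  V := univ
  isOpen_U := isOpen_univ
  isOpen_V := isOpen_univ
  mem_U := mem_univ 0
  mem_V := mem_univ 0
  contF := f.continuous.continuousOn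
  contG := f.symm.continuous.continuousOn
  mapsF := mapsTo_univ _ _
  mapsG := mapsTo_univ _ _
  leftInv x _ := f.symm_apply_apply x
  rightInv x _ := f.apply_symm_apply x
  mono := f.strictMono.strictMonoOn _
  fixes := hf

namespace GermHomeoPlus

def ofOrderIso (f : ℝ ≃o ℝ) (hf : f 0 = 0) : GermHomeoPlus :=
  ⟦LocalHomeoAtZero.ofOrderIso f hf⟧

lemma ofOrderIso_mul {f g : ℝ ≃o ℝ} (hf : f 0 = 0) (hg : g 0 = 0) :
    ofOrderIso (f * g) (by simp [hf, hg]) = ofOrderIso f hf * ofOrderIso g hg :=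
  Quotient.sound EventuallyEq.rfl

lemma ofOrderIso_eq_one_iff {f : ℝ ≃o ℝ} (hf : f 0 = 0) : ofOrderIso f hf = 1 ↔ f =ᶠ[𝓝 0] id :=
  Quotient.eq

noncomputable def pasteNearZeroHom : (ℝ ≃o ℝ) →* GermHomeoPlus where
  toFun f := ofOrderIso (Real.pasteNearZero f) (Real.pasteNearZero_apply_zero f)
  map_one' := (ofOrderIso_eq_one_iff _).2 (by simp [map_one])
  map_mul' f g := by simp only [map_mul]; exact ofOrderIso_mul _ _

lemma pasteNearZeroHom_injective : Function.Injective pasteNearZeroHom :=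
  (injective_iff_map_eq_one _).2 fun _ hf ↦
    Real.eq_one_of_pasteNearZero_eventuallyEq_id ((ofOrderIso_eq_one_iff _).1 hf)

end GermHomeoPlus

theorem exists_nontrivial_hom_germ_of_homeoPlus_general {G : Type*} [Group G]
    (h : ∃ ψ : G →* HomeoPlusReal, ∃ g : G, ψ g ≠ 1) :
    ∃ φ : G →* GermHomeoPlus, ∃ g : G, φ g ≠ 1 := by
  obtain ⟨ψ, g, hg⟩ := h
  let φ₀ : HomeoPlusReal →* GermHomeoPlus :=
    GermHomeoPlus.pasteNearZeroHom.comp HomeoPlusReal.toOrderIso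
  have hφ₀ : Function.Injective φ₀ :=
    GermHomeoPlus.pasteNearZeroHom_injective.comp HomeoPlusReal.toOrderIso_injective
  exact ⟨φ₀.comp ψ, g, fun h1 ↦ hg ((injective_iff_map_eq_one φ₀).1 hφ₀ _ h1)⟩

/-- If a countable group `G` admits a homomorphism with nontrivial image into
`Homeo₊(ℝ)`, then it admits a homomorphism with nontrivial image into the group
`Homeo̰₊(ℝ, 0)` of germs at `0` of orientation-preserving homeomorphisms of `ℝ`
fixing `0`. -/
theorem exists_nontrivial_hom_germ_of_homeoPlus {G : Type*} [Group G] [Countable G]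
    (h : ∃ ψ : G →* HomeoPlusReal, ∃ g : G, ψ g ≠ 1) :
    ∃ φ : G →* GermHomeoPlus, ∃ g : G, φ g ≠ 1 :=
  exists_nontrivial_hom_germ_of_homeoPlus_general h
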